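/- arXiv:math/0407347 — 2 statements merged into one kernel-verified Lean document; each statement's English description precedes it below -/
import Mathlib

section
/- Let D_n denote the set of finite sequences of positive integers taken from {1,...,n-1} that are admissible, meaning that between any two occurrences of the same value s in the sequence there is an entry strictly greater than s. Then for all n ≥ 2, the cardinality of D_n satisfies |D_n| = |D_{n-1}|^2 + |D_{n-1}|. -/
/-!
Write `m = n - 1`. Two copies of the largest value `m` would need a larger entry between them,
so `m` occurs at most once in a sequence of `D_{m+1}`. Hence such a sequence either avoids `m`,
and then lies in `D_m`, or is uniquely `a ++ m :: b`; and `a ++ m :: b` is admissible exactly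
when `a` and `b` are, because two equal entries on opposite sides of `m` are separated by `m`.
So `D_{m+1}` is in bijection with `D_m ⊕ D_m × D_m`.
-/

/-- A finite sequence of positive integers is admissible if between any two
occurrences of the same value there is a strictly larger entry. -/
def IsAdmissibleSeq (l : List ℕ) : Prop :=
  ∀ i j : ℕ, i < j → ∀ (hi : i < l.length) (hj : j < l.length),
    l.get ⟨i, hi⟩ = l.get ⟨j, hj⟩ →
    ∃ k : ℕ, i < k ∧ k < j ∧ ∃ hk : k < l.length, l.get ⟨i, hi⟩ < l.get ⟨k, hk⟩

/-- `Dset n` is the set of admissible sequences with entries in `{1, ..., n-1}`. -/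
def Dset (n : ℕ) : Set (List ℕ) :=
  {l | (∀ x ∈ l, 1 ≤ x ∧ x ≤ n - 1) ∧ IsAdmissibleSeq l}

theorem isAdmissibleSeq_iff_infix {l : List ℕ} :
    IsAdmissibleSeq l ↔ ∀ x t, x :: t ++ [x] <:+: l → ∃ y ∈ t, x < y := by
  constructor
  · rintro h x t ⟨s, u, rfl⟩
    obtain ⟨k, hik, hkj, hk, hlt⟩ := h s.length (s.length + t.length + 1) (by omega)
      (by simp) (by simp; omega) (by grind)
    refine ⟨t[k - s.length - 1]'(by omega), List.getElem_mem _, ?_⟩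
    convert hlt using 1
    · simp
    · grind
  · intro h i j hij hi hj (heq : l[i] = l[j])
    set t := (l.drop (i + 1)).take (j - i - 1)
    have hl : l = l.take i ++ (l[i] :: t ++ [l[i]]) ++ l.drop (j + 1) := by
      have hdrop : l.drop j = (l.drop (i + 1)).drop (j - i - 1) := by
        rw [List.drop_drop]; congr 1; omega
      calc l = l.take i ++ l[i] :: (t ++ l.drop j) := by
            rw [hdrop, List.take_append_drop, ← List.drop_eq_getElem_cons, List.take_append_drop]
        _ = _ := by rw [List.drop_eq_getElem_cons hj, heq]; simp
    obtain ⟨y, hy, hlt⟩ := h _ t ⟨_, _, hl.symm⟩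
    obtain ⟨k, hk, rfl⟩ := List.mem_iff_getElem.mp hy
    simp only [t, List.length_take, List.length_drop] at hk
    refine ⟨i + 1 + k, by omega, by omega, by omega, ?_⟩
    simpa [t, Nat.add_comm] using hlt

theorem IsAdmissibleSeq.of_infix {l l' : List ℕ} (h : IsAdmissibleSeq l) (hl' : l' <:+: l) :
    IsAdmissibleSeq l' :=
  isAdmissibleSeq_iff_infix.2 fun x t ht => isAdmissibleSeq_iff_infix.1 h x t (ht.trans hl')

theorem IsAdmissibleSeq.not_infix_of_forall_le {l t : List ℕ} {m : ℕ} (h : IsAdmissibleSeq l)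
    (hle : ∀ x ∈ l, x ≤ m) : ¬m :: t ++ [m] <:+: l := fun ht => by
  obtain ⟨y, hy, hlt⟩ := isAdmissibleSeq_iff_infix.1 h m t ht
  exact (hle y (ht.subset (by simp [hy]))).not_gt hlt

theorem IsAdmissibleSeq.notMem_of_append_cons {a b : List ℕ} {m : ℕ}
    (h : IsAdmissibleSeq (a ++ m :: b)) (hle : ∀ x ∈ a ++ m :: b, x ≤ m) : m ∉ a ∧ m ∉ b := by
  constructor
  · intro hm
    obtain ⟨s, t, rfl⟩ := List.append_of_mem hm
    exact h.not_infix_of_forall_le (t := t) hle ⟨s, b, by simp⟩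
  · intro hm
    obtain ⟨s, t, rfl⟩ := List.append_of_mem hm
    exact h.not_infix_of_forall_le (t := s) hle ⟨a, t, by simp⟩

theorem List.infix_or_infix_of_infix_append_cons {α : Type*} {l a b : List α} {m : α}
    (h : l <:+: a ++ m :: b) (hm : m ∉ l) : l <:+: a ∨ l <:+: b := by
  rcases List.infix_append_iff.1 h with h | h | ⟨l₁, l₂, rfl, h₁, h₂⟩
  · exact .inl h
  · rcases List.infix_cons_iff.1 h with h | h
    · rcases List.prefix_cons_iff.1 h with rfl | ⟨t, rfl, -⟩
      · exact .inl List.nil_infix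
      · exact absurd List.mem_cons_self hm
    · exact .inr h
  · rcases List.prefix_cons_iff.1 h₂ with rfl | ⟨t, rfl, -⟩
    · exact .inl (by simpa using h₁.isInfix)
    · exact absurd (by simp) hm

theorem IsAdmissibleSeq.append_cons {a b : List ℕ} {m : ℕ} (ha : IsAdmissibleSeq a)
    (hb : IsAdmissibleSeq b) (ha_lt : ∀ x ∈ a, x < m) (hb_lt : ∀ x ∈ b, x < m) :
    IsAdmissibleSeq (a ++ m :: b) := by
  rw [isAdmissibleSeq_iff_infix] at ha hb ⊢
  intro x t hx
  have hma : m ∉ a := fun h => (ha_lt m h).false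
  have hmb : m ∉ b := fun h => (hb_lt m h).false
  have hxm : x ≠ m := by
    rintro rfl
    have := hx.count_le x
    simp [List.count_eq_zero.2 hma, List.count_eq_zero.2 hmb] at this
  by_cases hmt : m ∈ t
  · refine ⟨m, hmt, ?_⟩
    have := hx.subset List.mem_cons_self
    simp only [List.mem_append, List.mem_cons] at this
    rcases this with h | h | h
    exacts [ha_lt x h, absurd h hxm, hb_lt x h]
  · have hm : m ∉ x :: t ++ [x] := by simp [hmt, hxm.symm]
    rcases List.infix_or_infix_of_infix_append_cons hx hm with h | h
    exacts [ha x t h, hb x t h]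

theorem notMem_of_mem_Dset {m : ℕ} {l : List ℕ} (hl : l ∈ Dset m) : m ∉ l :=
  fun h => by have := hl.1 m h; omega

theorem Dset_subset_Dset_succ (m : ℕ) : Dset m ⊆ Dset (m + 1) :=
  fun _ hl => ⟨fun x hx => by have := hl.1 x hx; omega, hl.2⟩

theorem append_cons_mem_Dset_succ_iff {m : ℕ} (hm : 0 < m) {a b : List ℕ} :
    a ++ m :: b ∈ Dset (m + 1) ↔ a ∈ Dset m ∧ b ∈ Dset m := by
  constructor
  · rintro ⟨hbd, hadm⟩
    obtain ⟨hma, hmb⟩ := hadm.notMem_of_append_cons fun x hx => by have := hbd x hx; omega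
    have hbd' : ∀ x ∈ a ++ m :: b, x ≠ m → 1 ≤ x ∧ x ≤ m - 1 := fun x hx hxm => by
      have := hbd x hx; omega
    exact ⟨⟨fun x hx => hbd' x (by simp [hx]) (ne_of_mem_of_not_mem hx hma),
        hadm.of_infix List.infix_append_left⟩,
      ⟨fun x hx => hbd' x (by simp [hx]) (ne_of_mem_of_not_mem hx hmb),
        hadm.of_infix ⟨a ++ [m], [], by simp⟩⟩⟩
  · rintro ⟨⟨ha, ha'⟩, ⟨hb, hb'⟩⟩
    refine ⟨fun x hx => ?_, ha'.append_cons hb' (fun x hx => ?_) (fun x hx => ?_)⟩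
    · rcases List.mem_append.1 hx with h | h | ⟨_, h⟩
      · have := ha x h; omega
      · omega
      · have := hb x h; omega
    · have := ha x hx; omega
    · have := hb x hx; omega

theorem Dset_succ_eq {m : ℕ} (hm : 0 < m) :
    Dset (m + 1) = Dset m ∪ (fun p : List ℕ × List ℕ => p.1 ++ m :: p.2) '' Dset m ×ˢ Dset m := by
  ext l
  constructor
  · intro hl
    by_cases hml : m ∈ l
    · obtain ⟨a, b, rfl⟩ := List.append_of_mem hml
      exact .inr ⟨(a, b), (append_cons_mem_Dset_succ_iff hm).1 hl, rfl⟩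
    · refine .inl ⟨fun x hx => ?_, hl.2⟩
      have := hl.1 x hx
      have := ne_of_mem_of_not_mem hx hml
      omega
  · rintro (hl | ⟨⟨a, b⟩, hab, rfl⟩)
    · exact Dset_subset_Dset_succ m hl
    · exact (append_cons_mem_Dset_succ_iff hm).2 hab

theorem disjoint_Dset_image_append_cons (m : ℕ) :
    Disjoint (Dset m) ((fun p : List ℕ × List ℕ => p.1 ++ m :: p.2) '' Dset m ×ˢ Dset m) := by
  rw [Set.disjoint_right]
  rintro _ ⟨⟨a, b⟩, -, rfl⟩ hl
  exact notMem_of_mem_Dset hl (by simp)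

theorem injOn_append_cons_Dset (m : ℕ) :
    Set.InjOn (fun p : List ℕ × List ℕ => p.1 ++ m :: p.2) (Dset m ×ˢ Dset m) := by
  rintro ⟨a₁, b₁⟩ ⟨ha₁, hb₁⟩ ⟨a₂, b₂⟩ - h
  obtain ⟨rfl, -, rfl⟩ := (List.append_cons_inj_of_notMem (notMem_of_mem_Dset ha₁)
    (notMem_of_mem_Dset hb₁)).1 h
  rfl

theorem Dset_subset_singleton_nil {n : ℕ} (hn : n ≤ 1) : Dset n ⊆ {[]} :=
  fun _ hl => List.eq_nil_iff_forall_not_mem.2 fun x hx => by have := hl.1 x hx; omega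

theorem Dset_finite (n : ℕ) : (Dset n).Finite := by
  induction n with
  | zero => exact (Set.finite_singleton []).subset (Dset_subset_singleton_nil (by omega))
  | succ m ih =>
    rcases Nat.eq_zero_or_pos m with rfl | hm
    · exact (Set.finite_singleton []).subset (Dset_subset_singleton_nil le_rfl)
    · rw [Dset_succ_eq hm]
      exact ih.union ((ih.prod ih).image _)

theorem card_Dset_succ (n : ℕ) (hn : 2 ≤ n) :
    Nat.card (Dset n) = Nat.card (Dset (n - 1)) ^ 2 + Nat.card (Dset (n - 1)) := by
  obtain ⟨m, rfl⟩ : ∃ m, n = m + 1 := ⟨n - 1, by omega⟩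
  have hfin := Dset_finite m
  rw [Nat.add_sub_cancel, Nat.card_coe_set_eq, Nat.card_coe_set_eq, Dset_succ_eq (by omega),
    Set.ncard_union_eq (disjoint_Dset_image_append_cons m) hfin ((hfin.prod hfin).image _),
    (injOn_append_cons_Dset m).ncard_image, Set.ncard_prod]
  ring
end

section
/- Let F = Z/2⟨b₁, b₂, b₃⟩ and let I be the two-sided ideal generated by R₁ = 1 + b₁ + b₃ + b₁b₂b₃ and R₂ = b₂ + b₂b₃ + b₁b₂ + b₂b₃b₁b₂. Let μ: F → F be the unital algebra endomorphism determined by μ(b₁) = 1 + b₂b₃, μ(b₂) = b₁, μ(b₃) = b₂. Then μ⁵(b₃) + b₃ ∈ I; i.e. μ⁵(b₃) ≡ b₃ modulo I. -/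
open FreeAlgebra

/-- The generators `b₁, b₂, b₃` of the free `ℤ/2`-algebra `F = ℤ/2⟨b₁,b₂,b₃⟩`. -/
noncomputable def trefoilB (i : Fin 3) : FreeAlgebra (ZMod 2) (Fin 3) :=
  FreeAlgebra.ι (ZMod 2) i

/-- `R₁ = 1 + b₁ + b₃ + b₁b₂b₃`. -/
noncomputable def trefoilR₁ : FreeAlgebra (ZMod 2) (Fin 3) :=
  1 + trefoilB 0 + trefoilB 2 + trefoilB 0 * trefoilB 1 * trefoilB 2

/-- `R₂ = b₂ + b₂b₃ + b₁b₂ + b₂b₃b₁b₂`. -/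
noncomputable def trefoilR₂ : FreeAlgebra (ZMod 2) (Fin 3) :=
  trefoilB 1 + trefoilB 1 * trefoilB 2 + trefoilB 0 * trefoilB 1 +
    trefoilB 1 * trefoilB 2 * trefoilB 0 * trefoilB 1

/-- The monodromy `μ` of the loop `Ω₃,₂` on degree-0 generators:
`μ(b₁) = 1 + b₂b₃`, `μ(b₂) = b₁`, `μ(b₃) = b₂`. -/
noncomputable def trefoilMu :
    FreeAlgebra (ZMod 2) (Fin 3) →ₐ[ZMod 2] FreeAlgebra (ZMod 2) (Fin 3) :=
  FreeAlgebra.lift (ZMod 2) ![1 + trefoilB 1 * trefoilB 2, trefoilB 0, trefoilB 1]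

/-- The fifth iterate of the monodromy fixes `b₃` modulo the two-sided ideal
`I = (R₁, R₂)`: `μ⁵(b₃) + b₃ ∈ I`. -/
theorem trefoil_monodromy_order_five :
    (⇑trefoilMu)^[5] (trefoilB 2) + trefoilB 2 ∈
      TwoSidedIdeal.span {trefoilR₁, trefoilR₂} := by
  have h2 : ∀ x : FreeAlgebra (ZMod 2) (Fin 3), x + x = 0 := fun x => by
    rw [← two_smul (ZMod 2) x, (by decide : (2:ZMod 2) = 0), zero_smul]
  have key : (⇑trefoilMu)^[5] (trefoilB 2) + trefoilB 2 =
      trefoilR₂ * trefoilB 2 + (1 + trefoilB 1 * trefoilB 2) * trefoilR₁ := by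
    have h5 : (⇑trefoilMu)^[5] (trefoilB 2) =
        1 + trefoilB 0 + trefoilB 1 * trefoilB 2 * trefoilB 0 := by
      simp only [Function.iterate_succ, Function.iterate_zero, Function.comp_apply, id_eq,
        trefoilMu, trefoilB, lift_ι_apply, map_add, map_mul, map_one, Matrix.cons_val_zero,
        Matrix.cons_val_one, Matrix.head_cons, Matrix.cons_val_two, Matrix.tail_cons]
      noncomm_ring
    rw [h5]
    have hrw : ∀ a b : FreeAlgebra (ZMod 2) (Fin 3), a + b = 0 → a = b := by
      intro a b h
      rw [eq_neg_of_add_eq_zero_left h, neg_eq_of_add_eq_zero_left (h2 b)]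
    apply hrw
    simp only [trefoilR₁, trefoilR₂, mul_add, add_mul, mul_one, one_mul, mul_assoc]
    abel_nf
    simp [two_smul, h2, add_assoc]
  rw [key]
  exact TwoSidedIdeal.add_mem _
    (TwoSidedIdeal.mul_mem_right _ _ _ (TwoSidedIdeal.subset_span (by simp)))
    (TwoSidedIdeal.mul_mem_left _ _ _ (TwoSidedIdeal.subset_span (by simp)))
end
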